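/- The set of partitions of n, ordered by the opposite dominance order (λ ≤ μ iff for all i, the sum of the first i parts of λ is at least the sum of the first i parts of μ), forms a lattice. -/

import Mathlib

/-- `psum l i` is the sum of the first `i` parts of `l`. -/
def psum (l : List ℕ) (i : ℕ) : ℕ := (l.take i).sum

/-- A partition of `n`: a non-increasing list of positive integers summing to `n`. -/
structure ListPartition (n : ℕ) where
  parts : List ℕ
  sorted : parts.Pairwise (· ≥ ·)
  pos : ∀ p ∈ parts, 0 < p
  sum_eq : parts.sum = n

/-- The opposite dominance order: `a ≤ b` iff all partial sums of `a` are at least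
those of `b`. -/
def oppLe {n : ℕ} (a b : ListPartition n) : Prop := ∀ i, psum b.parts i ≤ psum a.parts i

/-!
The partial-sum sequences of partitions of `n` are exactly the discretely concave, monotone
sequences `F : ℕ → ℕ` with `F 0 = 0` that are eventually `n`: the parts are recovered as the
increments of `F`. Such sequences are closed under pointwise `min`, so two partitions have a
join whose partial sums are the minimum of theirs. The one-part partition is a bottom element,
and a finite join-semilattice with a bottom element is a lattice, the meet of two elements
being the join of their common lower bounds.
-/

noncomputable abbrev completeLatticeOfFinite (α : Type*) [SemilatticeSup α] [OrderBot α]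
    [Finite α] : CompleteLattice α :=
  letI : SupSet α := ⟨fun s => (Set.toFinite s).toFinset.sup id⟩
  completeLatticeOfSup α fun s => by
    show IsLUB s ((Set.toFinite s).toFinset.sup id)
    simpa using (Set.toFinite s).toFinset.isLUB_sup_id

def DiscreteConcave (F : ℕ → ℕ) : Prop := ∀ i, F i + F (i + 2) ≤ 2 * F (i + 1)

theorem DiscreteConcave.min {F G : ℕ → ℕ} (hF : DiscreteConcave F) (hG : DiscreteConcave G) :
    DiscreteConcave fun i => min (F i) (G i) := by
  intro i
  rcases min_cases (F (i + 1)) (G (i + 1)) with ⟨h, _⟩ | ⟨h, _⟩ <;> dsimp only <;> rw [h]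
  · exact (add_le_add (min_le_left _ _) (min_le_left _ _)).trans (hF i)
  · exact (add_le_add (min_le_right _ _) (min_le_right _ _)).trans (hG i)

theorem DiscreteConcave.antitone_sub {F : ℕ → ℕ} (hF : DiscreteConcave F) (hmono : Monotone F) :
    Antitone fun i => F (i + 1) - F i :=
  antitone_nat_of_succ_le fun i => by
    have := hF i
    have := hmono (Nat.le_succ i)
    have := hmono (Nat.le_succ (i + 1))
    show F (i + 2) - F (i + 1) ≤ F (i + 1) - F i
    omega

theorem psum_cons (x : ℕ) (l : List ℕ) (i : ℕ) : psum (x :: l) (i + 1) = x + psum l i := by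
  simp [psum]

theorem psum_succ (l : List ℕ) (i : ℕ) : psum l (i + 1) = psum l i + l.getD i 0 := by
  rcases lt_or_ge i l.length with h | h
  · rw [psum, psum, List.sum_take_succ _ _ h, List.getD_eq_getElem _ _ h]
  · rw [psum, psum, List.take_of_length_le h, List.take_of_length_le (by omega),
      List.getD_eq_default _ _ h, add_zero]

theorem psum_mono (l : List ℕ) : Monotone (psum l) :=
  List.monotone_sum_take l

theorem psum_of_length_le (l : List ℕ) {i : ℕ} (h : l.length ≤ i) : psum l i = l.sum := by
  rw [psum, List.take_of_length_le h]

theorem psum_le_sum (l : List ℕ) (i : ℕ) : psum l i ≤ l.sum :=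
  (psum_mono l (le_max_left i l.length)).trans_eq (psum_of_length_le l (le_max_right _ _))

theorem discreteConcave_psum {l : List ℕ} (h : l.Pairwise (· ≥ ·)) :
    DiscreteConcave (psum l) := by
  intro i
  have hle : l.getD (i + 1) 0 ≤ l.getD i 0 := by
    rcases lt_or_ge (i + 1) l.length with hi | hi
    · rw [List.getD_eq_getElem _ _ hi, List.getD_eq_getElem _ _ (by omega)]
      exact List.pairwise_iff_getElem.mp h i (i + 1) _ hi (Nat.lt_succ_self i)
    · rw [List.getD_eq_default _ _ hi]
      exact Nat.zero_le _
  rw [psum_succ l (i + 1), psum_succ l i]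
  omega

theorem psum_filter_pos {l : List ℕ} (h : l.Pairwise (· ≥ ·)) (i : ℕ) :
    psum (l.filter (0 < ·)) i = psum l i := by
  induction l generalizing i with
  | nil => rfl
  | cons x l ih =>
    rcases Nat.eq_zero_or_pos x with rfl | hx
    · have hzero : ∀ y ∈ 0 :: l, y = 0 := by
        simpa using fun y hy => Nat.le_zero.mp (List.rel_of_pairwise_cons h hy)
      rw [List.filter_eq_nil_iff.mpr (by simpa using hzero), psum, psum,
        List.sum_eq_zero fun y hy => hzero y (List.mem_of_mem_take hy)]
      simp
    · rw [List.filter_cons_of_pos (by simpa using hx)]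
      cases i with
      | zero => rfl
      | succ i => rw [psum_cons, psum_cons, ih h.of_cons]

theorem eq_of_psum_eq : ∀ {l₁ l₂ : List ℕ}, (∀ x ∈ l₁, 0 < x) → (∀ x ∈ l₂, 0 < x) →
    (∀ i, psum l₁ i = psum l₂ i) → l₁ = l₂
  | [], [], _, _, _ => rfl
  | [], y :: _, _, h₂, h => by
    have := h 1
    simp only [psum, List.take_nil, List.take_one, List.head?_cons, Option.toList_some,
      List.sum_nil, List.sum_singleton] at this
    exact absurd this (h₂ y (by simp)).ne
  | x :: _, [], h₁, _, h => by
    have := h 1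
    simp only [psum, List.take_nil, List.take_one, List.head?_cons, Option.toList_some,
      List.sum_nil, List.sum_singleton] at this
    exact absurd this (h₁ x (by simp)).ne'
  | x :: l₁, y :: l₂, h₁, h₂, h => by
    have hxy : x = y := by simpa [psum_cons, psum] using h 1
    subst hxy
    congr 1
    refine eq_of_psum_eq (fun z hz => h₁ z (by simp [hz])) (fun z hz => h₂ z (by simp [hz]))
      fun i => ?_
    have := h (i + 1)
    rw [psum_cons, psum_cons] at this
    omega

section diffs

variable (F : ℕ → ℕ) (L : ℕ)

def diffs : List ℕ := (List.range L).map fun i => F (i + 1) - F i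

variable {F}

theorem sum_diffs_add (hmono : Monotone F) : (diffs F L).sum + F 0 = F L := by
  induction L with
  | zero => simp [diffs]
  | succ L ih =>
    have := hmono (Nat.le_add_right L 1)
    simp only [diffs, List.range_succ, List.map_append, List.sum_append] at ih ⊢
    simp only [List.map_cons, List.map_nil, List.sum_cons, List.sum_nil]
    omega

theorem psum_diffs_add (hmono : Monotone F) (i : ℕ) :
    psum (diffs F L) i + F 0 = F (min i L) := by
  rw [psum, diffs, ← List.map_take, List.take_range]
  exact sum_diffs_add _ hmono

theorem pairwise_diffs (hmono : Monotone F) (hconc : DiscreteConcave F) :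
    (diffs F L).Pairwise (· ≥ ·) :=
  List.pairwise_map.mpr (List.pairwise_lt_range.imp fun hij => hconc.antitone_sub hmono hij.le)

theorem psum_filter_diffs (h0 : F 0 = 0) (hmono : Monotone F) (hconc : DiscreteConcave F)
    (i : ℕ) : psum ((diffs F L).filter (0 < ·)) i = F (min i L) := by
  rw [psum_filter_pos (pairwise_diffs L hmono hconc), ← psum_diffs_add L hmono, h0, add_zero]

end diffs

attribute [ext] ListPartition

namespace ListPartition

variable {n : ℕ}

def ofPsum (F : ℕ → ℕ) (L : ℕ) (h0 : F 0 = 0) (hmono : Monotone F) (hconc : DiscreteConcave F)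
    (hL : ∀ i, L ≤ i → F i = n) : ListPartition n where
  parts := (diffs F L).filter (0 < ·)
  sorted := (pairwise_diffs L hmono hconc).filter _
  pos p hp := by simpa using List.of_mem_filter hp
  sum_eq := by
    rw [← psum_of_length_le (i := L) _ ((List.length_filter_le _ _).trans (by simp [diffs])),
      psum_filter_diffs L h0 hmono hconc, min_self, hL L le_rfl]

theorem psum_ofPsum {F : ℕ → ℕ} {L : ℕ} (h0 : F 0 = 0) (hmono : Monotone F)
    (hconc : DiscreteConcave F) (hL : ∀ i, L ≤ i → F i = n) (i : ℕ) :
    psum (ofPsum F L h0 hmono hconc hL).parts i = F i := by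
  rw [ofPsum, psum_filter_diffs L h0 hmono hconc]
  rcases le_total i L with h | h
  · rw [min_eq_left h]
  · rw [min_eq_right h, hL L le_rfl, hL i h]

theorem psum_le (p : ListPartition n) (i : ℕ) : psum p.parts i ≤ n :=
  (psum_le_sum p.parts i).trans_eq p.sum_eq

theorem psum_of_length_le (p : ListPartition n) {i : ℕ} (h : p.parts.length ≤ i) :
    psum p.parts i = n :=
  (_root_.psum_of_length_le p.parts h).trans p.sum_eq

def toPartition (p : ListPartition n) : n.Partition :=
  ⟨p.parts, fun hi => p.pos _ (by simpa using hi), by simpa using p.sum_eq⟩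

theorem toPartition_injective : Function.Injective (toPartition (n := n)) := fun a b h =>
  ListPartition.ext <| List.Perm.eq_of_pairwise' a.sorted b.sorted <|
    Multiset.coe_eq_coe.mp (congrArg Nat.Partition.parts h)

scoped instance : Finite (ListPartition n) :=
  .of_injective _ toPartition_injective

scoped instance : PartialOrder (ListPartition n) where
  le := oppLe
  le_refl _ _ := le_rfl
  le_trans _ _ _ hab hbc i := (hbc i).trans (hab i)
  le_antisymm a b hab hba :=
    ListPartition.ext (eq_of_psum_eq a.pos b.pos fun i => le_antisymm (hba i) (hab i))

scoped instance : Max (ListPartition n) where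
  max a b := ofPsum (fun i => min (psum a.parts i) (psum b.parts i))
    (max a.parts.length b.parts.length) rfl ((psum_mono _).min (psum_mono _))
    ((discreteConcave_psum a.sorted).min (discreteConcave_psum b.sorted)) fun _ h => by
      rw [a.psum_of_length_le (le_of_max_le_left h), b.psum_of_length_le (le_of_max_le_right h),
        min_self]

theorem psum_sup (a b : ListPartition n) (i : ℕ) :
    psum (a ⊔ b).parts i = min (psum a.parts i) (psum b.parts i) :=
  psum_ofPsum ..

scoped instance : SemilatticeSup (ListPartition n) where
  sup := max
  le_sup_left a b i := (psum_sup a b i).trans_le (min_le_left _ _)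
  le_sup_right a b i := (psum_sup a b i).trans_le (min_le_right _ _)
  sup_le _ _ _ hac hbc i := (psum_sup ..).trans_ge (le_min (hac i) (hbc i))

scoped instance : Bot (ListPartition n) where
  bot := ofPsum (fun i => if i = 0 then 0 else n) 1 rfl (fun _ _ _ => by grind) (fun _ => by grind)
    fun _ h => if_neg (by omega)

theorem psum_bot (i : ℕ) : psum (⊥ : ListPartition n).parts i = if i = 0 then 0 else n :=
  psum_ofPsum ..

scoped instance : OrderBot (ListPartition n) where
  bot_le p i := by
    rw [psum_bot]
    split_ifs with hi
    · simp [hi, psum]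
    · exact p.psum_le i

noncomputable abbrev lattice : Lattice (ListPartition n) :=
  (completeLatticeOfFinite (ListPartition n)).toLattice

end ListPartition

/-- The set of partitions of `n`, ordered by the opposite dominance order, forms a
lattice. -/
theorem partitions_oppDominance_lattice (n : ℕ) :
    ∃ L : Lattice (ListPartition n), ∀ a b : ListPartition n,
      (letI := L; a ≤ b) ↔ oppLe a b :=
  ⟨ListPartition.lattice, fun _ _ => Iff.rfl⟩
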